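/- Let G = (V, E) be a d-regular graph with adjacency matrix A, and let λ ≥ 0 be such that ‖Ax‖ ≤ λ‖x‖ for every vector x orthogonal to the all-ones vector. Let S, T ⊆ V with S nonempty, and let μ be a probability distribution supported on S such that μ(b) ≤ c·μ(b') for every two elements b, b' ∈ S. If u is drawn according to μ and v is a uniformly random neighbor of u, then Pr[v ∈ T] ≤ |T|/|V| + (λ/d)·√(c·|T|/|S|). -/

import Mathlib

open Finset

/-!
Write `μ = 1/n + x` with `∑ x = 0`, where `n = |V|`. Since `A` is symmetric with row sums `d`,
`Pr[v ∈ T] = (1/d) ∑_{v ∈ T} (Aμ)_v = |T|/n + (1/d) ∑_{v ∈ T} (Ax)_v`. By Cauchy–Schwarz and the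
spectral hypothesis the error term is at most `(λ/d) √|T| ‖x‖`, and
`‖x‖² ≤ ‖μ‖² ≤ (max μ) ∑ μ ≤ c/|S|`, because the ratio condition forces `μ ≤ c/|S|` on `S`.
-/

section

variable {ι : Type*}

theorem le_div_card_of_forall_le_mul {s : Finset ι} {μ : ι → ℝ} {c : ℝ}
    (hsum : ∑ b ∈ s, μ b = 1) (hμc : ∀ b ∈ s, ∀ b' ∈ s, μ b ≤ c * μ b') :
    ∀ b ∈ s, μ b ≤ c / #s := by
  intro b hb
  have hs : (0 : ℝ) < #s := by
    exact_mod_cast (nonempty_of_sum_ne_zero (hsum ▸ one_ne_zero)).card_pos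
  rw [le_div_iff₀ hs, mul_comm, ← nsmul_eq_mul]
  calc #s • μ b ≤ ∑ b' ∈ s, c * μ b' := card_nsmul_le_sum s _ _ (hμc b hb)
    _ = c := by rw [← mul_sum, hsum, mul_one]

theorem sum_sq_le_mul_sum {s : Finset ι} {μ : ι → ℝ} {M : ℝ}
    (h0 : ∀ u ∈ s, 0 ≤ μ u) (hM : ∀ u ∈ s, μ u ≤ M) :
    ∑ u ∈ s, μ u ^ 2 ≤ M * ∑ u ∈ s, μ u := by
  rw [mul_sum]
  exact sum_le_sum fun u hu => by
    rw [sq]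
    exact mul_le_mul_of_nonneg_right (hM u hu) (h0 u hu)

theorem sum_mul_sum_div_eq_of_symm [Fintype ι] {A : ι → ι → ℝ} (hsym : ∀ u v, A u v = A v u)
    (μ : ι → ℝ) (T : Finset ι) (d : ℝ) :
    ∑ u, μ u * ((∑ v ∈ T, A u v) / d) = (∑ v ∈ T, ∑ u, A v u * μ u) / d := by
  simp_rw [← mul_div_assoc, ← sum_div, mul_sum]
  rw [sum_comm]
  simp_rw [hsym, mul_comm]

theorem sum_mul_eq_sum_mul_sub_add [Fintype ι] {a : ι → ℝ} {d : ℝ} (ha : ∑ u, a u = d)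
    (μ : ι → ℝ) (m : ℝ) :
    ∑ u, a u * μ u = ∑ u, a u * (μ u - m) + d * m := by
  simp only [mul_sub, sum_sub_distrib, ← sum_mul, ha, sub_add_cancel]

theorem sum_le_sqrt_card_mul_sqrt_sum_sq [Fintype ι] (T : Finset ι) (y : ι → ℝ) :
    ∑ v ∈ T, y v ≤ √(#T : ℝ) * √(∑ v, y v ^ 2) := by
  rw [← Real.sqrt_mul (Nat.cast_nonneg _)]
  exact Real.le_sqrt_of_sq_le <| sq_sum_le_card_mul_sum_sq.trans <|
    mul_le_mul_of_nonneg_left (sum_le_univ_sum_of_nonneg fun _ => sq_nonneg _) (Nat.cast_nonneg _)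

variable [Fintype ι] (f : ι → ℝ)

theorem sum_sub_mean_eq_zero : ∑ v, (f v - (∑ w, f w) / Fintype.card ι) = 0 := by
  rcases isEmpty_or_nonempty ι with hι | hι
  · simp
  · rw [sum_sub_distrib, sum_const, card_univ, nsmul_eq_mul,
      mul_div_cancel₀ _ (Nat.cast_ne_zero.2 Fintype.card_ne_zero), sub_self]

theorem sum_sq_sub_mean_le : ∑ v, (f v - (∑ w, f w) / Fintype.card ι) ^ 2 ≤ ∑ v, f v ^ 2 := by
  set m := (∑ w, f w) / Fintype.card ι
  have expand : ∑ v, (f v - m) ^ 2 = ∑ v, f v ^ 2 - m * ∑ v, f v - m * ∑ v, (f v - m) := by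
    simp_rw [show ∀ v, (f v - m) ^ 2 = f v ^ 2 - m * f v - m * (f v - m) from fun v => by ring]
    rw [sum_sub_distrib, sum_sub_distrib, ← mul_sum, ← mul_sum]
  have hm : 0 ≤ m * ∑ v, f v := by
    rw [div_mul_eq_mul_div, ← sq]
    positivity
  rw [expand, sum_sub_mean_eq_zero, mul_zero, sub_zero]
  linarith

end

theorem expander_mixing_weighted_general {ι : Type*} [Fintype ι]
    (A : ι → ι → ℕ) (d : ℕ) (hd : 0 < d)
    (hsym : ∀ u v, A u v = A v u)
    (hreg : ∀ u, ∑ v, A u v = d)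
    (lam : ℝ) (hlam : 0 ≤ lam)
    (hspec : ∀ x : ι → ℝ, (∑ v, x v) = 0 →
      Real.sqrt (∑ u, (∑ v, (A u v : ℝ) * x v) ^ 2) ≤ lam * Real.sqrt (∑ v, x v ^ 2))
    (S T : Finset ι) (c : ℝ)
    (μ : ι → ℝ) (hμ0 : ∀ u, 0 ≤ μ u) (hμ1 : ∑ u, μ u = 1)
    (hμS : ∀ u, u ∉ S → μ u = 0)
    (hμc : ∀ b ∈ S, ∀ b' ∈ S, μ b ≤ c * μ b') :
    (∑ u, μ u * ((∑ v ∈ T, (A u v : ℝ)) / d)) ≤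
      (T.card : ℝ) / (Fintype.card ι : ℝ) +
        (lam / d) * Real.sqrt (c * (T.card : ℝ) / (S.card : ℝ)) := by
  set x : ι → ℝ := fun u => μ u - (∑ w, μ w) / Fintype.card ι
  have hμS_sum : ∑ u ∈ S, μ u = 1 := by
    rw [← hμ1]
    exact sum_subset (subset_univ S) fun u _ hu => hμS u hu
  have hμ_sq : ∑ u, μ u ^ 2 ≤ c / #S := calc
    ∑ u, μ u ^ 2 = ∑ u ∈ S, μ u ^ 2 :=
      (sum_subset (subset_univ S) fun u _ hu => by simp [hμS u hu]).symm
    _ ≤ c / #S * ∑ u ∈ S, μ u :=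
      sum_sq_le_mul_sum (fun u _ => hμ0 u) (le_div_card_of_forall_le_mul hμS_sum hμc)
    _ = c / #S := by rw [hμS_sum, mul_one]
  have hAx : √(∑ u, (∑ v, (A u v : ℝ) * x v) ^ 2) ≤ lam * √(c / #S) :=
    (hspec x (sum_sub_mean_eq_zero μ)).trans <| mul_le_mul_of_nonneg_left
      (Real.sqrt_le_sqrt ((sum_sq_sub_mean_le μ).trans hμ_sq)) hlam
  have hsplit : ∑ u, μ u * ((∑ v ∈ T, (A u v : ℝ)) / d) =
      #T / Fintype.card ι + (∑ v ∈ T, ∑ u, (A v u : ℝ) * x u) / d := by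
    have hrow (v : ι) : ∑ u, (A v u : ℝ) = d := by exact_mod_cast hreg v
    rw [sum_mul_sum_div_eq_of_symm (fun u v => congrArg Nat.cast (hsym u v)),
      sum_congr rfl fun v _ => sum_mul_eq_sum_mul_sub_add (hrow v) μ ((∑ w, μ w) / Fintype.card ι),
      sum_add_distrib, sum_const, nsmul_eq_mul, add_div, add_comm]
    congr 1
    rw [hμ1]
    field_simp
  rw [hsplit, div_mul_eq_mul_div]
  gcongr
  calc ∑ v ∈ T, ∑ u, (A v u : ℝ) * x u ≤ √(#T : ℝ) * √(∑ v, (∑ u, (A v u : ℝ) * x u) ^ 2) :=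
        sum_le_sqrt_card_mul_sqrt_sum_sq T _
    _ ≤ √(#T : ℝ) * (lam * √(c / #S)) := by gcongr
    _ = lam * √(c * #T / #S) := by
        rw [mul_left_comm, ← Real.sqrt_mul (Nat.cast_nonneg _), mul_div_assoc', mul_comm (#T : ℝ)]

/-- expander mixing bound, weighted version.  Let `A` be the adjacency
matrix (with natural number multiplicities, self loops allowed) of a `d`-regular graph on a
finite vertex set, and let `λ ≥ 0` satisfy `‖Ax‖ ≤ λ‖x‖` for every `x` orthogonal to the
all-ones vector.  Let `S, T ⊆ V` with `S` nonempty and let `μ` be a probability distribution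
supported on `S` with `μ(b) ≤ c·μ(b')` for all `b, b' ∈ S`.  Picking `u ∼ μ` and `v` a
uniformly random neighbor of `u` (i.e. with probability `A u v / d`),
`Pr[v ∈ T] ≤ |T|/|V| + (λ/d)·√(c·|T|/|S|)`. -/
theorem expander_mixing_weighted {ι : Type*} [Fintype ι] [DecidableEq ι]
    (A : ι → ι → ℕ) (d : ℕ) (hd : 0 < d)
    (hsym : ∀ u v, A u v = A v u)
    (hreg : ∀ u, ∑ v, A u v = d)
    (lam : ℝ) (hlam : 0 ≤ lam)
    (hspec : ∀ x : ι → ℝ, (∑ v, x v) = 0 →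
      Real.sqrt (∑ u, (∑ v, (A u v : ℝ) * x v) ^ 2) ≤ lam * Real.sqrt (∑ v, x v ^ 2))
    (S T : Finset ι) (hS : S.Nonempty) (c : ℝ)
    (μ : ι → ℝ) (hμ0 : ∀ u, 0 ≤ μ u) (hμ1 : ∑ u, μ u = 1)
    (hμS : ∀ u, u ∉ S → μ u = 0)
    (hμc : ∀ b ∈ S, ∀ b' ∈ S, μ b ≤ c * μ b') :
    (∑ u, μ u * ((∑ v ∈ T, (A u v : ℝ)) / d)) ≤
      (T.card : ℝ) / (Fintype.card ι : ℝ) +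
        (lam / d) * Real.sqrt (c * (T.card : ℝ) / (S.card : ℝ)) :=
  expander_mixing_weighted_general A d hd hsym hreg lam hlam hspec S T c μ hμ0 hμ1 hμS hμc
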